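/- Let M be a subset of a real normed space X and S, T : X → X self-mappings such that u ∈ Fix(S) ∩ Fix(T) for some u ∈ X and T(∂M ∩ M) ⊆ M. Assume S(P_M(u)) = P_M(u), P_M(u) is closed and q-starshaped with q ∈ Fix(S), the pair (S,T) is a generalized JH-suboperator pair with order n₀ on P_M(u), and for all x, y ∈ C_M^S(u) ∪ {u}: if y = u then ψ(∫₀^{‖Tx−Ty‖} φ(t)dt) ≤ F(ψ(∫₀^{‖Sx−Sy‖} φ(t)dt), φᵤ(∫₀^{‖Sx−Sy‖} φ(t)dt)), and if y ∈ C_M^S(u) then for each k ∈ (0,1), ψ(∫₀^{‖Tx−Ty‖} φ(t)dt) ≤ F(ψ(∫₀^{(1/k)γ(m₃(x,y))} φ(t)dt), φᵤ(∫₀^{(1/k)γ(m₃(x,y))} φ(t)dt)), where ψ is an altering distance function, φᵤ is an ultra altering distance function, F is a C-class function, and the triple (ψ, φᵤ, F) is monotone. If cl(T(C_M^S(u))) is compact and S and T are continuous on C_M^S(u), then P_M(u) ∩ Fix(S) ∩ Fix(T) ≠ ∅. -/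

import Mathlib

open MeasureTheory Filter Topology Set

noncomputable section

/-- The integral `∫₀^a φ(t) dt`. -/
def intPhi (phi : ℝ → ℝ) (a : ℝ) : ℝ := ∫ t in (0:ℝ)..a, phi t

/-- `φ : [0,∞) → [0,∞)` is Lebesgue integrable, summable, nonnegative, with
`∫₀^ε φ(t)dt > 0` for all `ε > 0`. -/
def PhiAdmissible (phi : ℝ → ℝ) : Prop :=
  (∀ t ≥ (0:ℝ), 0 ≤ phi t) ∧ (∀ b : ℝ, IntervalIntegrable phi volume 0 b) ∧
  ∀ ε > (0:ℝ), 0 < intPhi phi ε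

/-- Altering distance function: nondecreasing, continuous, `ψ t = 0 ↔ t = 0` on `[0,∞)`. -/
def AlteringDistance (ψ : ℝ → ℝ) : Prop :=
  MonotoneOn ψ (Ici 0) ∧ ContinuousOn ψ (Ici 0) ∧ ∀ t ≥ (0:ℝ), (ψ t = 0 ↔ t = 0)

/-- Ultra altering distance function: continuous, nondecreasing, positive on `(0,∞)`,
nonnegative at `0`. -/
def UltraAltering (φu : ℝ → ℝ) : Prop :=
  ContinuousOn φu (Ici 0) ∧ MonotoneOn φu (Ici 0) ∧ (∀ t > (0:ℝ), 0 < φu t) ∧ 0 ≤ φu 0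

/-- C-class function: continuous on `[0,∞)²`, `F s t ≤ s`, and `F s t = s → s = 0 ∨ t = 0`. -/
def CClassFun (F : ℝ → ℝ → ℝ) : Prop :=
  ContinuousOn (Function.uncurry F) (Ici 0 ×ˢ Ici 0) ∧
  (∀ s ≥ (0:ℝ), ∀ t ≥ (0:ℝ), F s t ≤ s) ∧
  (∀ s ≥ (0:ℝ), ∀ t ≥ (0:ℝ), F s t = s → s = 0 ∨ t = 0)

/-- The triple `(ψ, φᵤ, F)` is monotone. -/
def MonotoneTriple (ψ φu : ℝ → ℝ) (F : ℝ → ℝ → ℝ) : Prop :=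
  ∀ x y : ℝ, 0 ≤ x → x ≤ y → F (ψ x) (φu x) ≤ F (ψ y) (φu y)

/-- The triple `(ψ, φᵤ, F)` is strictly monotone. -/
def StrictMonotoneTriple (ψ φu : ℝ → ℝ) (F : ℝ → ℝ → ℝ) : Prop :=
  ∀ x y : ℝ, 0 ≤ x → x < y → F (ψ x) (φu x) < F (ψ y) (φu y)

/-- `γ : (0,∞) → (0,∞)` is nondecreasing with `γ t < t` for all `t > 0`. -/
def GammaAdmissible (γ : ℝ → ℝ) : Prop :=
  (∀ t > (0:ℝ), 0 < γ t) ∧ MonotoneOn γ (Ioi 0) ∧ ∀ t > (0:ℝ), γ t < t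

variable {X : Type*} [NormedAddCommGroup X] [NormedSpace ℝ X]

/-- Fixed points of `T` lying in `M`. -/
def FixOn (T : X → X) (M : Set X) : Set X := {x ∈ M | T x = x}

/-- Points of coincidence `PC(S,T)` of the pair `(S,T)` over the set `M`. -/
def PCset (S T : X → X) (M : Set X) : Set X := {w | ∃ x ∈ M, S x = w ∧ T x = w}

/-- `(S,T)` is a generalized JH-operator pair with order `n` on `M`:
there is `x ∈ M` and `w = Sx = Tx ∈ PC(S,T)` with `‖w - x‖ ≤ (δ(PC(S,T)))ⁿ`. -/
def GenJHOp (S T : X → X) (M : Set X) (n : ℕ) : Prop :=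
  ∃ x ∈ M, S x = T x ∧ ‖S x - x‖ ≤ Metric.diam (PCset S T M) ^ n

/-- `(S,T)` is a generalized JH-suboperator pair with order `n` on `M` (w.r.t. `q`):
for each `k ∈ [0,1]`, `(S, T_k)` with `T_k x = (1-k)q + kTx` is a generalized JH-operator
pair with order `n`. -/
def GenJHSubOp (S T : X → X) (M : Set X) (q : X) (n : ℕ) : Prop :=
  ∀ k ∈ Icc (0:ℝ) 1, GenJHOp S (fun x => (1 - k) • q + k • T x) M n

/-- `M` is `q`-starshaped. -/
def Starshaped (M : Set X) (q : X) : Prop :=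
  q ∈ M ∧ ∀ x ∈ M, segment ℝ q x ⊆ M

def m1 (S T : X → X) (x y : X) : ℝ :=
  max (max ‖S x - S y‖ ‖S x - T x‖)
    (max ‖S y - T y‖ ((‖T x - T y‖ + ‖S y - T x‖) / 2))

def n1 (S T : X → X) (x y : X) : ℝ :=
  max ‖S x - S y‖ (max ‖T x - S x‖ ‖S y - T y‖)

def m2 (S T : X → X) (x y : X) : ℝ :=
  max (max ‖S x - S y‖ ‖S x - T x‖)
    (max ‖S y - T y‖ ((‖S x - T y‖ + ‖S y - T x‖) / 2))

def m3 (S T : X → X) (q x y : X) : ℝ :=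
  max (max ‖S x - S y‖ (Metric.infDist (S x) (segment ℝ q (T x))))
    (max (Metric.infDist (S y) (segment ℝ q (T y)))
      ((Metric.infDist (S x) (segment ℝ q (T y)) +
        Metric.infDist (S y) (segment ℝ q (T x))) / 2))

/-- `Y^{a} = {f_a(k) : k ∈ [0,1]}` for a family `f`. -/
def Yfam (f : X → ℝ → X) (a : X) : Set X := f a '' Icc (0:ℝ) 1

def m4 (f : X → ℝ → X) (S T : X → X) (x y : X) : ℝ :=
  max (max ‖S x - S y‖ (Metric.infDist (S x) (Yfam f (T x))))
    (max (Metric.infDist (S y) (Yfam f (T y)))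
      ((Metric.infDist (S x) (Yfam f (T y)) +
        Metric.infDist (S y) (Yfam f (T x))) / 2))

/-- `ℑ = {f_α}_{α ∈ M}` is a family of functions `[0,1] → M` with `f_α(1) = α`. -/
def FamilyOn (f : X → ℝ → X) (M : Set X) : Prop :=
  (∀ a ∈ M, ∀ t ∈ Icc (0:ℝ) 1, f a t ∈ M) ∧ ∀ a ∈ M, f a 1 = a

/-- The family is contractive with contractiveness function `Φ : (0,1) → (0,1)`. -/
def ContractiveFamily (f : X → ℝ → X) (M : Set X) (Phi : ℝ → ℝ) : Prop :=
  (∀ t ∈ Ioo (0:ℝ) 1, Phi t ∈ Ioo (0:ℝ) 1) ∧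
  ∀ a ∈ M, ∀ b ∈ M, ∀ t ∈ Ioo (0:ℝ) 1, ‖f a t - f b t‖ ≤ Phi t * ‖a - b‖

/-- The family is jointly continuous: `tₙ → t₀` and `αₙ → α₀` imply
`f_{αₙ}(tₙ) → f_{α₀}(t₀)`. -/
def JointlyContinuousFamily (f : X → ℝ → X) (M : Set X) : Prop :=
  ∀ (tn : ℕ → ℝ) (t0 : ℝ), (∀ n, tn n ∈ Icc (0:ℝ) 1) → t0 ∈ Icc (0:ℝ) 1 →
    Tendsto tn atTop (𝓝 t0) →
    ∀ (an : ℕ → X) (a0 : X), (∀ n, an n ∈ M) → a0 ∈ M →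
      Tendsto an atTop (𝓝 a0) →
      Tendsto (fun n => f (an n) (tn n)) atTop (𝓝 (f a0 t0))

/-- `(S,T)` is a generalized JHℑ-suboperator pair with order `n` on `M`:
for each `k ∈ [0,1]`, `(S, T_k)` with `T_k x = f_{Tx}(k)` is a generalized
JH-operator pair with order `n`. -/
def GenJHImSubOp (f : X → ℝ → X) (S T : X → X) (M : Set X) (n : ℕ) : Prop :=
  ∀ k ∈ Icc (0:ℝ) 1, GenJHOp S (fun x => f (T x) k) M n

/-- Weak convergence of a sequence. -/
def WeakTendsTo (x : ℕ → X) (a : X) : Prop :=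
  ∀ f : StrongDual ℝ X, Tendsto (fun n => f (x n)) atTop (𝓝 (f a))

/-- Weak (sequential) closure. -/
def WSeqCl (A : Set X) : Set X := {a | ∃ x : ℕ → X, (∀ n, x n ∈ A) ∧ WeakTendsTo x a}

/-- Weak (sequential) compactness. -/
def WSeqCompact (A : Set X) : Prop :=
  ∀ x : ℕ → X, (∀ n, x n ∈ A) →
    ∃ a ∈ A, ∃ g : ℕ → ℕ, StrictMono g ∧ WeakTendsTo (x ∘ g) a

/-- `T` is completely continuous on `M`: weak convergence implies strong
convergence of images. -/
def CompletelyContinuousOn (T : X → X) (M : Set X) : Prop :=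
  ∀ (x : ℕ → X) (a : X), (∀ n, x n ∈ M) → a ∈ M → WeakTendsTo x a →
    Tendsto (fun n => T (x n)) atTop (𝓝 (T a))

/-- `S` is weakly continuous on `M`. -/
def WeaklyContinuousOn (S : X → X) (M : Set X) : Prop :=
  ∀ (x : ℕ → X) (a : X), (∀ n, x n ∈ M) → a ∈ M → WeakTendsTo x a →
    WeakTendsTo (fun n => S (x n)) (S a)

/-- `G` is demiclosed at `0` on `M`. -/
def DemiclosedAtZero (G : X → X) (M : Set X) : Prop :=
  ∀ (x : ℕ → X) (a : X), (∀ n, x n ∈ M) → a ∈ M → WeakTendsTo x a →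
    Tendsto (fun n => G (x n)) atTop (𝓝 (0 : X)) → G a = 0

/-- `T` is hemicompact on `M`. -/
def Hemicompact (T : X → X) (M : Set X) : Prop :=
  ∀ x : ℕ → X, (∀ n, x n ∈ M) →
    Tendsto (fun n => ‖x n - T (x n)‖) atTop (𝓝 (0 : ℝ)) →
    ∃ (a : X) (g : ℕ → ℕ), StrictMono g ∧ Tendsto (x ∘ g) atTop (𝓝 a)

/-- Opial's condition. -/
def OpialCondition (Y : Type*) [NormedAddCommGroup Y] [NormedSpace ℝ Y] : Prop :=
  ∀ (x : ℕ → Y) (a : Y), WeakTendsTo x a → ∀ y : Y, y ≠ a →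
    liminf (fun n => ‖x n - a‖) atTop < liminf (fun n => ‖x n - y‖) atTop

/-- `P_M(u)`, the set of best approximations to `u` out of `M`. -/
def PMset (M : Set X) (u : X) : Set X := {x ∈ M | ‖x - u‖ = Metric.infDist u M}

/-- `C_M^S(u) = {x ∈ M : Sx ∈ P_M(u)}`. -/
def CMSset (M : Set X) (S : X → X) (u : X) : Set X := {x ∈ M | S x ∈ PMset M u}


/-! For `k ∈ (0,1)` the contractive condition forces `S` and `T_k = (1-k)q + kT` to have at
most one point of coincidence in `P_M(u)`, so the JH-condition, with `δ(PC(S,T_k)) = 0`,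
produces a common fixed point `x_k` of `S` and `T_k`. Letting `k → 1`, compactness of
`cl T(C_M^S(u))` yields a limit point of the `x_k`, which is a common fixed point of `S` and `T`
by continuity. -/

namespace PhiAdmissible

variable {phi : ℝ → ℝ}

lemma intPhi_mono (hphi : PhiAdmissible phi) {a b : ℝ} (ha : 0 ≤ a) (hab : a ≤ b) :
    intPhi phi a ≤ intPhi phi b := by
  have hsplit : intPhi phi a + ∫ t in a..b, phi t = intPhi phi b :=
    intervalIntegral.integral_add_adjacent_intervals (hphi.2.1 a)
      ((hphi.2.1 a).symm.trans (hphi.2.1 b))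
  have hnonneg : 0 ≤ ∫ t in a..b, phi t :=
    intervalIntegral.integral_nonneg hab fun t ht => hphi.1 t (ha.trans ht.1)
  linarith

end PhiAdmissible

lemma AlteringDistance.nonneg {ψ : ℝ → ℝ} (hψ : AlteringDistance ψ) {t : ℝ} (ht : 0 ≤ t) :
    0 ≤ ψ t :=
  (hψ.2.2 0 le_rfl).2 rfl ▸ hψ.1 (mem_Ici.mpr le_rfl) ht ht

lemma CClassFun.lt_altering {ψ φu : ℝ → ℝ} {F : ℝ → ℝ → ℝ} (hF : CClassFun F)
    (hψ : AlteringDistance ψ) (hφu : UltraAltering φu) {s : ℝ} (hs : 0 < s) :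
    F (ψ s) (φu s) < ψ s := by
  have hψs : 0 ≤ ψ s := hψ.nonneg hs.le
  have hφus : 0 < φu s := hφu.2.2.1 s hs
  refine (hF.2.1 _ hψs _ hφus.le).lt_of_ne fun heq => ?_
  rcases hF.2.2 _ hψs _ hφus.le heq with h | h
  · exact hs.ne' ((hψ.2.2 s hs.le).1 h)
  · exact hφus.ne' h

section Coincidence

variable {S T : X → X} {q : X}

lemma m3_eq_of_mem_segment {x y : X} (hx : S x ∈ segment ℝ q (T x))
    (hy : S y ∈ segment ℝ q (T y)) : m3 S T q x y = ‖S x - S y‖ := by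
  have hxy : Metric.infDist (S x) (segment ℝ q (T y)) ≤ ‖S x - S y‖ :=
    (Metric.infDist_le_dist_of_mem hy).trans_eq (dist_eq_norm _ _)
  have hyx : Metric.infDist (S y) (segment ℝ q (T x)) ≤ ‖S x - S y‖ :=
    (Metric.infDist_le_dist_of_mem hx).trans_eq ((dist_comm _ _).trans (dist_eq_norm _ _))
  rw [m3, Metric.infDist_zero_of_mem hx, Metric.infDist_zero_of_mem hy]
  refine le_antisymm ?_ (le_max_left _ _ |>.trans (le_max_left _ _))
  exact max_le (max_le le_rfl (norm_nonneg _))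
    (max_le (norm_nonneg _) (by linarith))

lemma pcset_subsingleton_of_contraction {N : Set X} {phi ψ φu γ : ℝ → ℝ} {F : ℝ → ℝ → ℝ}
    (hphi : PhiAdmissible phi) (hψ : AlteringDistance ψ) (hφu : UltraAltering φu)
    (hF : CClassFun F) (hγ : GammaAdmissible γ) {k : ℝ} (hk : k ∈ Ioo (0:ℝ) 1)
    (hcontr : ∀ x ∈ N, ∀ y ∈ N,
      ψ (intPhi phi ‖T x - T y‖) ≤
        F (ψ (intPhi phi ((1 / k) * γ (m3 S T q x y))))
          (φu (intPhi phi ((1 / k) * γ (m3 S T q x y))))) :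
    (PCset S (fun x => (1 - k) • q + k • T x) N).Subsingleton := by
  rintro _ ⟨x, hx, rfl, hTx : (1 - k) • q + k • T x = S x⟩ _
    ⟨y, hy, rfl, hTy : (1 - k) • q + k • T y = S y⟩
  by_contra hne
  have hk0 : 0 < k := hk.1
  have hseg : ∀ z, (1 - k) • q + k • T z = S z → S z ∈ segment ℝ q (T z) :=
    fun z hz => ⟨1 - k, k, by linarith [hk.2], hk0.le, by ring, hz⟩
  set D := ‖S x - S y‖
  have hD : 0 < D := norm_pos_iff.mpr (sub_ne_zero.mpr hne)
  have hTxy : ‖T x - T y‖ = D / k := by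
    have : S x - S y = k • (T x - T y) := by rw [← hTx, ← hTy]; module
    rw [show D = ‖k • (T x - T y)‖ from congrArg norm this, norm_smul,
      Real.norm_of_nonneg hk0.le]
    field_simp
  set a := (1 / k) * γ D
  have ha : 0 < a := mul_pos (one_div_pos.mpr hk0) (hγ.1 D hD)
  have hab : a ≤ ‖T x - T y‖ := by
    rw [hTxy]
    exact (mul_le_mul_of_nonneg_left (hγ.2.2 D hD).le (one_div_pos.mpr hk0).le).trans_eq
      (one_div_mul_eq_div k D)
  have hIa : 0 < intPhi phi a := hphi.2.2 a ha
  have hIab : intPhi phi a ≤ intPhi phi ‖T x - T y‖ := hphi.intPhi_mono ha.le hab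
  have hc := hcontr x hx y hy
  rw [m3_eq_of_mem_segment (hseg x hTx) (hseg y hTy)] at hc
  have hψ_le : ψ (intPhi phi a) ≤ ψ (intPhi phi ‖T x - T y‖) :=
    hψ.1 (mem_Ici.mpr hIa.le) (mem_Ici.mpr (hIa.le.trans hIab)) hIab
  exact (hc.trans_lt (hF.lt_altering hψ hφu hIa)).not_ge hψ_le

end Coincidence

lemma GenJHOp.exists_fixedPoint_of_subsingleton {Y : Type*} [NormedAddCommGroup Y]
    {S T : Y → Y} {N : Set Y} {n : ℕ}
    (h : GenJHOp S T N n) (hn : n ≠ 0) (hPC : (PCset S T N).Subsingleton) :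
    ∃ x ∈ N, S x = x ∧ T x = x := by
  obtain ⟨x, hx, hSTx, hbd⟩ := h
  rw [Metric.diam_subsingleton hPC, zero_pow hn, norm_le_zero_iff, sub_eq_zero] at hbd
  exact ⟨x, hx, hbd, hSTx ▸ hbd⟩

lemma ContinuousOn.apply_eq_of_tendsto {Y Z : Type*} [TopologicalSpace Y] [TopologicalSpace Z]
    [T2Space Z] {f : Y → Z} {s : Set Y} (hf : ContinuousOn f s) {x : ℕ → Y} {a : Y} {b : Z}
    (hxs : ∀ n, x n ∈ s) (ha : a ∈ s) (hxa : Tendsto x atTop (𝓝 a))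
    (hfx : Tendsto (fun n => f (x n)) atTop (𝓝 b)) : f a = b :=
  tendsto_nhds_unique ((hf a ha).tendsto.comp (tendsto_nhdsWithin_iff.mpr ⟨hxa, .of_forall hxs⟩))
    hfx

lemma tendsto_of_eq_convex_comb {q a : X} {x y : ℕ → X} {k : ℕ → ℝ}
    (hx : ∀ n, x n = (1 - k n) • q + k n • y n) (hk : Tendsto k atTop (𝓝 1))
    (hy : Tendsto y atTop (𝓝 a)) : Tendsto x atTop (𝓝 a) := by
  have h := (((tendsto_const_nhds (x := (1:ℝ))).sub hk).smul (tendsto_const_nhds (x := q))).add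
    (hk.smul hy)
  rw [sub_self, zero_smul, one_smul, zero_add] at h
  exact h.congr fun n => (hx n).symm

theorem stmt_17_general {X : Type*} [NormedAddCommGroup X] [NormedSpace ℝ X]
    (M : Set X) (S T : X → X) (u : X)
    (hSPM : S '' PMset M u = PMset M u)
    (hPMcl : IsClosed (PMset M u))
    (q : X)
    (phi ψ φu : ℝ → ℝ) (F : ℝ → ℝ → ℝ)
    (hphi : PhiAdmissible phi) (hψ : AlteringDistance ψ) (hφu : UltraAltering φu)
    (hF : CClassFun F)
    (γ : ℝ → ℝ) (hγ : GammaAdmissible γ)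
    (n₀ : ℕ) (hn₀ : 1 ≤ n₀) (hJH : GenJHSubOp S T (PMset M u) q n₀)
    (hcontr : ∀ x ∈ CMSset M S u ∪ {u}, ∀ y ∈ CMSset M S u ∪ {u},
      (y = u →
        ψ (intPhi phi ‖T x - T y‖) ≤
          F (ψ (intPhi phi ‖S x - S y‖)) (φu (intPhi phi ‖S x - S y‖))) ∧
      (y ∈ CMSset M S u → ∀ k ∈ Ioo (0:ℝ) 1,
        ψ (intPhi phi ‖T x - T y‖) ≤
          F (ψ (intPhi phi ((1 / k) * γ (m3 S T q x y))))
            (φu (intPhi phi ((1 / k) * γ (m3 S T q x y))))))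
    (hcmp : IsCompact (closure (T '' CMSset M S u)))
    (hScont : ContinuousOn S (CMSset M S u)) (hTcont : ContinuousOn T (CMSset M S u)) :
    ∃ x ∈ PMset M u, S x = x ∧ T x = x := by
  set P := PMset M u
  have hPC : P ⊆ CMSset M S u := fun x hx => ⟨hx.1, hSPM.subset (mem_image_of_mem S hx)⟩
  have happrox : ∀ k ∈ Ioo (0:ℝ) 1, ∃ x ∈ P, S x = x ∧ (1 - k) • q + k • T x = x := fun k hk =>
    (hJH k (Ioo_subset_Icc_self hk)).exists_fixedPoint_of_subsingleton (by omega)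
      (pcset_subsingleton_of_contraction hphi hψ hφu hF hγ hk fun x hx y hy =>
        (hcontr x (.inl (hPC hx)) y (.inl (hPC hy))).2 (hPC hy) k hk)
  obtain ⟨k, -, hk01, hk⟩ := exists_seq_strictMono_tendsto' (zero_lt_one' ℝ)
  choose x hxP hSx hTx using fun n => happrox (k n) (hk01 n)
  obtain ⟨a, -, g, hg, hTxa⟩ :=
    hcmp.tendsto_subseq fun n => subset_closure (mem_image_of_mem T (hPC (hxP n)))
  have hxa : Tendsto (x ∘ g) atTop (𝓝 a) :=
    tendsto_of_eq_convex_comb (fun n => (hTx (g n)).symm) (hk.comp hg.tendsto_atTop) hTxa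
  have haP : a ∈ P := hPMcl.mem_of_tendsto hxa (.of_forall fun n => hxP (g n))
  refine ⟨a, haP, ?_, ?_⟩
  · exact (hScont.mono hPC).apply_eq_of_tendsto (fun n => hxP (g n)) haP hxa
      (hxa.congr fun n => (hSx (g n)).symm)
  · exact (hTcont.mono hPC).apply_eq_of_tendsto (fun n => hxP (g n)) haP hxa hTxa

theorem stmt_17 {X : Type*} [NormedAddCommGroup X] [NormedSpace ℝ X]
    (M : Set X) (S T : X → X) (u : X) (hSu : S u = u) (hTu : T u = u)
    (hTbd : T '' (frontier M ∩ M) ⊆ M)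
    (hSPM : S '' PMset M u = PMset M u)
    (hPMcl : IsClosed (PMset M u))
    (q : X) (hstar : Starshaped (PMset M u) q) (hq : S q = q)
    (phi ψ φu : ℝ → ℝ) (F : ℝ → ℝ → ℝ)
    (hphi : PhiAdmissible phi) (hψ : AlteringDistance ψ) (hφu : UltraAltering φu)
    (hF : CClassFun F) (hmono : MonotoneTriple ψ φu F)
    (γ : ℝ → ℝ) (hγ : GammaAdmissible γ)
    (n₀ : ℕ) (hn₀ : 1 ≤ n₀) (hJH : GenJHSubOp S T (PMset M u) q n₀)
    (hcontr : ∀ x ∈ CMSset M S u ∪ {u}, ∀ y ∈ CMSset M S u ∪ {u},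
      (y = u →
        ψ (intPhi phi ‖T x - T y‖) ≤
          F (ψ (intPhi phi ‖S x - S y‖)) (φu (intPhi phi ‖S x - S y‖))) ∧
      (y ∈ CMSset M S u → ∀ k ∈ Ioo (0:ℝ) 1,
        ψ (intPhi phi ‖T x - T y‖) ≤
          F (ψ (intPhi phi ((1 / k) * γ (m3 S T q x y))))
            (φu (intPhi phi ((1 / k) * γ (m3 S T q x y))))))
    (hcmp : IsCompact (closure (T '' CMSset M S u)))
    (hScont : ContinuousOn S (CMSset M S u)) (hTcont : ContinuousOn T (CMSset M S u)) :
    ∃ x ∈ PMset M u, S x = x ∧ T x = x :=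
  stmt_17_general M S T u hSPM hPMcl q phi ψ φu F hphi hψ hφu hF γ hγ n₀ hn₀ hJH hcontr hcmp hScont
    hTcont

end
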